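/- arXiv:2403.14122 — 2 statements merged into one kernel-verified Lean document; each statement's English description precedes it below -/
import Mathlib

section
/- Let p ≥ 3 and suppose (β,h) is a p-special point, i.e. H = H_{β,h,p} has a unique global maximizer m_* ∈ (−1,1) and H''(m_*) = 0. Then H'(m_*) = H''(m_*) = H^{(3)}(m_*) = 0 and H^{(4)}(m_*) < 0. -/
open Real MeasureTheory Filter
open scoped BigOperators Topology

noncomputable section

/-- The spin value (`±1`) of a Boolean coordinate. -/
def spin (b : Bool) : ℝ := if b then 1 else -1

/-- The total magnetization `S_N = ∑ᵢ Xᵢ` of a configuration. -/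
def mag {N : ℕ} (x : Fin N → Bool) : ℝ := ∑ i, spin (x i)

/-- The Hamiltonian of the `p`-spin Curie-Weiss model:
`β N^{1-p} ∑_{i₁,…,i_p} x_{i₁} ⋯ x_{i_p} + h ∑ᵢ xᵢ`. -/
def cwHamiltonian (p N : ℕ) (β h : ℝ) (x : Fin N → Bool) : ℝ :=
  β * (N : ℝ) ^ ((1 : ℤ) - (p : ℤ)) * (∑ i : Fin p → Fin N, ∏ j, spin (x (i j)))
    + h * mag x

/-- The (unnormalized) Gibbs weight of a configuration. -/
def cwWeight (p N : ℕ) (β h : ℝ) (x : Fin N → Bool) : ℝ :=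
  Real.exp (cwHamiltonian p N β h x)

/-- The probability of an event `E` under the `p`-spin Curie-Weiss measure `P_{β,h,p}`. -/
def cwProb (p N : ℕ) (β h : ℝ) (E : Set (Fin N → Bool)) : ℝ :=
  (∑ x : Fin N → Bool, E.indicator (cwWeight p N β h) x) /
    ∑ x : Fin N → Bool, cwWeight p N β h x

/-- Conditional probability of `E` given `A` under the `p`-spin Curie-Weiss measure. -/
def cwCondProb (p N : ℕ) (β h : ℝ) (E A : Set (Fin N → Bool)) : ℝ :=
  cwProb p N β h (E ∩ A) / cwProb p N β h A

/-- The binary entropy function `I(x) = ½[(1+x)log(1+x) + (1-x)log(1-x)]`. -/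
def binEnt (x : ℝ) : ℝ := (1/2) * ((1+x) * Real.log (1+x) + (1-x) * Real.log (1-x))

/-- The function `H_{β,h,p}(x) = βxᵖ + hx - I(x)`. -/
def Hfun (p : ℕ) (β h : ℝ) (x : ℝ) : ℝ := β * x ^ p + h * x - binEnt x

/-- `m` is a global maximizer of `H_{β,h,p}` on `[-1,1]`, lying in `(-1,1)`. -/
def isMaximizer (p : ℕ) (β h m : ℝ) : Prop :=
  m ∈ Set.Ioo (-1 : ℝ) 1 ∧ ∀ x ∈ Set.Icc (-1 : ℝ) 1, Hfun p β h x ≤ Hfun p β h m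

/-- `m` is the unique global maximizer of `H_{β,h,p}`. -/
def isUniqueMaximizer (p : ℕ) (β h m : ℝ) : Prop :=
  isMaximizer p β h m ∧ ∀ m', isMaximizer p β h m' → m' = m

/-- `(β,h)` is a `p`-regular point with unique global maximizer `m`. -/
def pRegular (p : ℕ) (β h m : ℝ) : Prop :=
  isUniqueMaximizer p β h m ∧ iteratedDeriv 2 (Hfun p β h) m < 0

/-- `(β,h)` is a `p`-special point with unique global maximizer `m`. -/
def pSpecial (p : ℕ) (β h m : ℝ) : Prop :=
  isUniqueMaximizer p β h m ∧ iteratedDeriv 2 (Hfun p β h) m = 0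

/-- `(β,h)` is a `p`-critical point: `H_{β,h,p}` has more than one global maximizer. -/
def pCritical (p : ℕ) (β h : ℝ) : Prop :=
  ∃ m₁ m₂, m₁ ≠ m₂ ∧ isMaximizer p β h m₁ ∧ isMaximizer p β h m₂

/-- The probability assigned to a set `S ⊆ ℝ` by the centered Gaussian with variance `v`. -/
def gaussProb (v : ℝ) (S : Set ℝ) : ℝ :=
  ∫ t in S, (Real.sqrt (2 * Real.pi * v))⁻¹ * Real.exp (-t ^ 2 / (2 * v))

/-- The CDF of the centered Gaussian with variance `v`. -/
def gaussCDF (v x : ℝ) : ℝ := gaussProb v (Set.Iic x)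

/-- The standard normal CDF `Φ`. -/
def stdNormCDF (x : ℝ) : ℝ := gaussCDF 1 x

/-- The CDF of the limit law `F` at a `p`-special point, where `c = H⁽⁴⁾(m_*)`:
`dF(x) = (2/Γ(1/4)) (-c/24)^{1/4} exp(c x⁴/24) dx`. -/
def specialCDF (c x : ℝ) : ℝ :=
  ∫ t in Set.Iic x, (2 / Real.Gamma (1/4)) * ((-c) / 24) ^ ((1:ℝ)/4) * Real.exp (c * t ^ 4 / 24)

/-- The inverse hyperbolic tangent `tanh⁻¹(t) = ½ log((1+t)/(1-t))`. -/
def arctanh (t : ℝ) : ℝ := (1/2) * Real.log ((1+t)/(1-t))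

/-- The function `g(t) = tanh⁻¹(t)/(p t^{p-1})`, so that the maximum pseudolikelihood
estimate of `β` is `g(X̄)`. -/
def gMPL (p : ℕ) (t : ℝ) : ℝ := arctanh t / (p * t ^ (p - 1))

/-- The threshold `β*(p) = inf{β ≥ 0 : sup_{x∈[0,1]} H_{β,0,p}(x) > 0}`. -/
def betaStar (p : ℕ) : ℝ := sInf {b : ℝ | 0 ≤ b ∧ ∃ x ∈ Set.Icc (0:ℝ) 1, 0 < Hfun p b 0 x}

/-! At an interior global maximum `m` we have `H'(m) = 0`. If also `H''(m) = 0` but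
`H'''(m) ≠ 0`, then `H''` changes sign at `m`, so `H'` vanishes at `m` and has the same strict
sign on both sides of it; then `H` is strictly monotone near `m`, which is impossible at a maximum.
The two equations `H''(m) = H'''(m) = 0` force `m² = 1 - 2/p` and `βp(p-1)m^{p-2} = p/2`, and
substituting these into `H⁽⁴⁾` gives `H⁽⁴⁾(m) = -p³/2`. -/

open Set

lemma strictMonoOn_Ico_of_deriv_pos {g : ℝ → ℝ} {a b : ℝ} (hg : ContinuousAt g a)
    (hpos : ∀ x ∈ Ioo a b, 0 < deriv g x) : StrictMonoOn g (Ico a b) := by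
  refine strictMonoOn_of_deriv_pos (convex_Ico a b) (fun x hx => ?_) (by rwa [interior_Ico])
  rcases eq_or_lt_of_le hx.1 with rfl | hax
  · exact hg.continuousWithinAt
  · exact (differentiableAt_of_deriv_ne_zero (hpos x ⟨hax, hx.2⟩).ne').continuousAt
      |>.continuousWithinAt

section ThirdDerivative

variable {f : ℝ → ℝ} {x₀ : ℝ}

lemma IsLocalMax.iteratedDeriv_three_nonpos (hmax : IsLocalMax f x₀) (hf : ContinuousAt f x₀)
    (hf' : ContinuousAt (deriv f) x₀) (h2 : iteratedDeriv 2 f x₀ = 0) :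
    iteratedDeriv 3 f x₀ ≤ 0 := by
  by_contra! h3
  rw [iteratedDeriv_succ] at h3
  have hright : ∀ᶠ x in 𝓝[>] x₀, 0 < deriv (deriv f) x ∧ f x ≤ f x₀ := by
    filter_upwards [nhdsWithin_le_nhds (eventually_nhdsWithin_sign_eq_of_deriv_pos h3 h2),
      nhdsWithin_le_nhds hmax, self_mem_nhdsWithin] with x hsign hx (hx₀ : x₀ < x)
    rw [sign_pos (sub_pos.2 hx₀), sign_eq_one_iff, iteratedDeriv_succ, iteratedDeriv_one]
      at hsign
    exact ⟨hsign, hx⟩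
  obtain ⟨b, hb, hsub⟩ := mem_nhdsGT_iff_exists_Ioo_subset.1 hright
  have hf'pos : ∀ x ∈ Ioo x₀ b, 0 < deriv f x := fun x hx =>
    hmax.deriv_eq_zero ▸ strictMonoOn_Ico_of_deriv_pos hf' (fun y hy => (hsub hy).1)
      (left_mem_Ico.2 hb) (Ioo_subset_Ico_self hx) hx.1
  obtain ⟨x, hx⟩ := nonempty_Ioo.2 (mem_Ioi.1 hb)
  exact (hsub hx).2.not_gt <|
    strictMonoOn_Ico_of_deriv_pos hf hf'pos (left_mem_Ico.2 hb) (Ioo_subset_Ico_self hx) hx.1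

lemma IsLocalMax.iteratedDeriv_three_eq_zero (hmax : IsLocalMax f x₀) (hf : ContinuousAt f x₀)
    (hf' : ContinuousAt (deriv f) x₀) (h2 : iteratedDeriv 2 f x₀ = 0) :
    iteratedDeriv 3 f x₀ = 0 := by
  refine le_antisymm (hmax.iteratedDeriv_three_nonpos hf hf' h2) ?_
  rw [← neg_neg x₀] at hmax hf hf'
  have hneg : ContinuousAt (fun x : ℝ => -x) (-x₀) := continuousAt_neg
  have hderiv : deriv (fun x => f (-x)) = fun x => -deriv f (-x) :=
    funext fun _ => deriv_comp_neg _ _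
  have hreflect := IsLocalMax.iteratedDeriv_three_nonpos (f := fun x => f (-x)) (x₀ := -x₀)
    (hmax.comp_continuous hneg) (hf.comp hneg) (hderiv ▸ (hf'.comp hneg).neg)
    (by simpa [iteratedDeriv_comp_neg] using h2)
  rw [iteratedDeriv_comp_neg, neg_neg, smul_eq_mul] at hreflect
  linarith

end ThirdDerivative

lemma hasDerivAt_binEnt {x : ℝ} (hx : x ∈ Ioo (-1 : ℝ) 1) :
    HasDerivAt binEnt (arctanh x) x := by
  have hxp : 0 < 1 + x := by linarith [hx.1]
  have hxm : 0 < 1 - x := by linarith [hx.2]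
  have h := (((hasDerivAt_id x).const_add 1).mul
      (((hasDerivAt_id x).const_add 1).log hxp.ne')).add
    (((hasDerivAt_id x).const_sub 1).mul (((hasDerivAt_id x).const_sub 1).log hxm.ne'))
  refine (h.const_mul (1 / 2)).congr_deriv ?_
  simp only [arctanh, log_div hxp.ne' hxm.ne', id]
  field_simp
  ring

lemma hasDerivAt_arctanh {x : ℝ} (hx : x ∈ Ioo (-1 : ℝ) 1) :
    HasDerivAt arctanh (1 - x ^ 2)⁻¹ x := by
  have hxp : 0 < 1 + x := by linarith [hx.1]
  have hxm : 0 < 1 - x := by linarith [hx.2]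
  have h := ((((hasDerivAt_id x).const_add 1).div ((hasDerivAt_id x).const_sub 1) hxm.ne').log
    (div_pos hxp hxm).ne').const_mul (1 / 2)
  refine h.congr_deriv ?_
  have hq : 1 - x ^ 2 ≠ 0 := by nlinarith
  simp only [id, Pi.div_apply]
  field_simp
  ring

lemma hasDerivAt_inv_one_sub_sq {x : ℝ} (hx : x ∈ Ioo (-1 : ℝ) 1) :
    HasDerivAt (fun y => (1 - y ^ 2)⁻¹) (2 * x / (1 - x ^ 2) ^ 2) x := by
  have hq : 1 - x ^ 2 ≠ 0 := by nlinarith [hx.1, hx.2]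
  refine (((hasDerivAt_pow 2 x).const_sub 1).inv hq).congr_deriv ?_
  field_simp
  ring

lemma hasDerivAt_two_mul_div_one_sub_sq_sq {x : ℝ} (hx : x ∈ Ioo (-1 : ℝ) 1) :
    HasDerivAt (fun y => 2 * y / (1 - y ^ 2) ^ 2) ((2 + 6 * x ^ 2) / (1 - x ^ 2) ^ 3) x := by
  have hq : 1 - x ^ 2 ≠ 0 := by nlinarith [hx.1, hx.2]
  refine (((hasDerivAt_id x).const_mul 2).div (((hasDerivAt_pow 2 x).const_sub 1).pow 2)
    (pow_ne_zero 2 hq)).congr_deriv ?_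
  simp only [id, Pi.pow_apply]
  field_simp
  ring

lemma hasDerivAt_const_mul_pow_sub (c : ℝ) {n k : ℕ} (hk : k ≤ n) (x : ℝ) :
    HasDerivAt (fun y => c * y ^ (n - k)) (c * (n - k) * x ^ (n - (k + 1))) x := by
  refine ((hasDerivAt_pow (n - k) x).const_mul c).congr_deriv ?_
  rw [Nat.cast_sub hk, Nat.sub_sub, mul_assoc]

theorem Set.EqOn.iteratedDeriv_succ {𝕜 F : Type*} [NontriviallyNormedField 𝕜]
    [NormedAddCommGroup F] [NormedSpace 𝕜 F] {f g g' : 𝕜 → F} {s : Set 𝕜} {n : ℕ}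
    (hs : IsOpen s) (hfg : EqOn (iteratedDeriv n f) g s) (hg : ∀ x ∈ s, HasDerivAt g (g' x) x) :
    EqOn (iteratedDeriv (n + 1) f) g' s := fun x hx => by
  rw [_root_.iteratedDeriv_succ, (hfg.eventuallyEq_of_mem (hs.mem_nhds hx)).deriv_eq,
    (hg x hx).deriv]

section Hfun

variable {p : ℕ} {β h x : ℝ}

lemma hasDerivAt_Hfun (hx : x ∈ Ioo (-1 : ℝ) 1) :
    HasDerivAt (Hfun p β h) (β * p * x ^ (p - 1) + h - arctanh x) x :=
  ((((hasDerivAt_pow p x).const_mul β).add ((hasDerivAt_id x).const_mul h)).sub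
    (hasDerivAt_binEnt hx)).congr_deriv (by ring)

lemma continuousAt_deriv_Hfun (hx : x ∈ Ioo (-1 : ℝ) 1) :
    ContinuousAt (deriv (Hfun p β h)) x := by
  have hD : ContinuousAt (fun y => β * p * y ^ (p - 1) + h - arctanh y) x :=
    ((continuousAt_const.mul (continuousAt_id.pow _)).add continuousAt_const).sub
      (hasDerivAt_arctanh hx).continuousAt
  refine hD.congr (Filter.eventually_of_mem (isOpen_Ioo.mem_nhds hx) fun y hy => ?_)
  exact (hasDerivAt_Hfun hy).deriv.symm

lemma eqOn_iteratedDeriv_one_Hfun :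
    EqOn (iteratedDeriv 1 (Hfun p β h)) (fun x => β * p * x ^ (p - 1) + h - arctanh x)
      (Ioo (-1) 1) := fun x hx => by
  rw [iteratedDeriv_one, (hasDerivAt_Hfun hx).deriv]

lemma eqOn_iteratedDeriv_two_Hfun (hp : 1 ≤ p) :
    EqOn (iteratedDeriv 2 (Hfun p β h))
      (fun x => β * p * (p - 1) * x ^ (p - 2) - (1 - x ^ 2)⁻¹) (Ioo (-1) 1) :=
  eqOn_iteratedDeriv_one_Hfun.iteratedDeriv_succ isOpen_Ioo fun x hx => by
    exact_mod_cast ((hasDerivAt_const_mul_pow_sub (β * p) hp x).add_const h).sub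
      (hasDerivAt_arctanh hx)

lemma eqOn_iteratedDeriv_three_Hfun (hp : 2 ≤ p) :
    EqOn (iteratedDeriv 3 (Hfun p β h))
      (fun x => β * p * (p - 1) * (p - 2) * x ^ (p - 3) - 2 * x / (1 - x ^ 2) ^ 2)
      (Ioo (-1) 1) :=
  (eqOn_iteratedDeriv_two_Hfun (by omega)).iteratedDeriv_succ isOpen_Ioo fun x hx => by
    exact_mod_cast (hasDerivAt_const_mul_pow_sub (β * p * (p - 1)) hp x).sub
      (hasDerivAt_inv_one_sub_sq hx)

lemma eqOn_iteratedDeriv_four_Hfun (hp : 3 ≤ p) :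
    EqOn (iteratedDeriv 4 (Hfun p β h))
      (fun x => β * p * (p - 1) * (p - 2) * (p - 3) * x ^ (p - 4)
        - (2 + 6 * x ^ 2) / (1 - x ^ 2) ^ 3)
      (Ioo (-1) 1) :=
  (eqOn_iteratedDeriv_three_Hfun (by omega)).iteratedDeriv_succ isOpen_Ioo fun x hx => by
    exact_mod_cast (hasDerivAt_const_mul_pow_sub (β * p * (p - 1) * (p - 2)) hp x).sub
      (hasDerivAt_two_mul_div_one_sub_sq_sq hx)

end Hfun

lemma iteratedDeriv_four_Hfun_eq_of_iteratedDeriv_two_three_eq_zero {p : ℕ} {β h m : ℝ}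
    (hp : 3 ≤ p) (hm : m ∈ Ioo (-1 : ℝ) 1) (h2 : iteratedDeriv 2 (Hfun p β h) m = 0)
    (h3 : iteratedDeriv 3 (Hfun p β h) m = 0) :
    iteratedDeriv 4 (Hfun p β h) m = -p ^ 3 / 2 := by
  rw [eqOn_iteratedDeriv_two_Hfun (by omega) hm] at h2
  rw [eqOn_iteratedDeriv_three_Hfun (by omega) hm] at h3
  rw [eqOn_iteratedDeriv_four_Hfun hp hm]
  set P : ℝ := (p : ℝ)
  have hP : 3 ≤ P := Nat.ofNat_le_cast.mpr hp
  have hq : 0 < 1 - m ^ 2 := by nlinarith [hm.1, hm.2]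
  set A := β * P * (P - 1) * m ^ (p - 2)
  have hA : A * (1 - m ^ 2) = 1 := by
    field_simp at h2
    linear_combination h2
  have hpow3 : m * m ^ (p - 3) = m ^ (p - 2) := by rw [← pow_succ']; congr 1; omega
  have hpow4 : (P - 3) * m ^ (p - 4) * m ^ 2 = (P - 3) * m ^ (p - 2) := by
    rcases hp.eq_or_lt with rfl | hp4
    · simp [P]
    · rw [mul_assoc, ← pow_add]; congr 2; omega
  have hA3 : (P - 2) * A * (1 - m ^ 2) ^ 2 = 2 * m ^ 2 := by
    field_simp at h3
    linear_combination m * h3 - β * P * (P - 1) * (P - 2) * (1 - m ^ 2) ^ 2 * hpow3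
  have hm2 : P * (1 - m ^ 2) = 2 := by linear_combination hA3 - (P - 2) * (1 - m ^ 2) * hA
  have hm0 : m ^ 2 ≠ 0 := by nlinarith
  have hAP : A = P / 2 := by linear_combination P / 2 * hA - A / 2 * hm2
  have hpoly : β * P * (P - 1) * (P - 2) * (P - 3) * m ^ (p - 4) = (P - 3) * P ^ 2 / 2 := by
    refine mul_right_cancel₀ hm0 ?_
    linear_combination β * P * (P - 1) * (P - 2) * hpow4 + (P - 2) * (P - 3) * hAP
      + (P - 3) * P / 2 * hm2
  have hent : 2 + 6 * m ^ 2 = P ^ 2 * (2 * P - 3) / 2 * (1 - m ^ 2) ^ 3 := by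
    linear_combination
      (-((2 * P - 3) / 2 * (1 - m ^ 2) * (P * (1 - m ^ 2) + 2) + 4)) * hm2
  simp only
  rw [hpoly, hent]
  field_simp
  ring

theorem derivatives_at_special_point_general
    (p : ℕ) (hp : 3 ≤ p) (β h m : ℝ)
    (hsp : pSpecial p β h m) :
    iteratedDeriv 1 (Hfun p β h) m = 0 ∧
    iteratedDeriv 2 (Hfun p β h) m = 0 ∧
    iteratedDeriv 3 (Hfun p β h) m = 0 ∧
    iteratedDeriv 4 (Hfun p β h) m < 0 := by
  obtain ⟨⟨⟨hm, hmax⟩, -⟩, h2⟩ := hsp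
  have hloc : IsLocalMax (Hfun p β h) m :=
    Filter.eventually_of_mem (isOpen_Ioo.mem_nhds hm) fun x hx =>
      hmax x (Ioo_subset_Icc_self hx)
  have h3 : iteratedDeriv 3 (Hfun p β h) m = 0 :=
    hloc.iteratedDeriv_three_eq_zero (hasDerivAt_Hfun hm).continuousAt
      (continuousAt_deriv_Hfun hm) h2
  refine ⟨by rw [iteratedDeriv_one]; exact hloc.deriv_eq_zero, h2, h3, ?_⟩
  rw [iteratedDeriv_four_Hfun_eq_of_iteratedDeriv_two_three_eq_zero hp hm h2 h3]
  have hp0 : (0 : ℝ) < p := Nat.cast_pos.2 (by omega)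
  linarith [pow_pos hp0 3]

/-- **Derivatives of `H` at a `p`-special point.** -/
theorem derivatives_at_special_point
    (p : ℕ) (hp : 3 ≤ p) (β h m : ℝ) (hβ : 0 < β) (hh : 0 < h)
    (hsp : pSpecial p β h m) :
    iteratedDeriv 1 (Hfun p β h) m = 0 ∧
    iteratedDeriv 2 (Hfun p β h) m = 0 ∧
    iteratedDeriv 3 (Hfun p β h) m = 0 ∧
    iteratedDeriv 4 (Hfun p β h) m < 0 :=
  derivatives_at_special_point_general p hp β h m hsp
end
end

section
/- Let a ≠ 0 and c be real constants and σ > 0, let Z be a centered Gaussian random variable with variance σ², and for each integer N ≥ 2 set b_N := c/√N. Then there exists a constant C > 0 (depending only on a, c, σ) such that for all N ≥ 2, sup_{x ∈ ℝ} | P( aZ + b_N Z² > x ) − P( aZ > x ) | ≤ C (log N)/√N. -/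
open Real MeasureTheory Filter
open scoped BigOperators Topology

noncomputable section

/-! The events `{aZ + εZ² > x}` and `{aZ > x}` can only differ where `|Z| ≥ T` or where
`|aZ - x| ≤ |ε| T²`. The first region has Gaussian mass at most `2 exp(-T²/2σ²)` by the Chernoff
bound, the second at most `2|ε|T² / (|a| √(2πσ²))` because the Gaussian density is bounded by its
peak. With `ε = c/√N` and `T² = σ² log N` both are `O(log N / √N)`. -/

open ProbabilityTheory
open scoped NNReal symmDiff

lemma gaussProb_eq_gaussianReal_real {v : ℝ} (hv : 0 < v) (S : Set ℝ) :
    gaussProb v S = (gaussianReal 0 v.toNNReal).real S := by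
  rw [measureReal_def, gaussianReal_apply_eq_integral _ (by simpa using hv),
    ENNReal.toReal_ofReal (setIntegral_nonneg_of_ae (ae_of_all _ (gaussianPDFReal_nonneg _ _)))]
  simp [gaussProb, gaussianPDFReal, Real.coe_toNNReal _ hv.le]

lemma gaussianPDFReal_le (μ : ℝ) (v : ℝ≥0) (x : ℝ) :
    gaussianPDFReal μ v x ≤ (√(2 * π * v))⁻¹ := by
  rw [gaussianPDFReal]
  refine mul_le_of_le_one_right (by positivity) (exp_le_one_iff.2 ?_)
  exact div_nonpos_of_nonpos_of_nonneg (neg_nonpos.2 (sq_nonneg _)) (by positivity)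

lemma gaussianReal_le_mul_volume (μ : ℝ) {v : ℝ≥0} (hv : v ≠ 0) (s : Set ℝ) :
    gaussianReal μ v s ≤ ENNReal.ofReal (√(2 * π * v))⁻¹ * volume s := by
  rw [gaussianReal_apply _ hv, ← setLIntegral_const]
  exact lintegral_mono fun x => ENNReal.ofReal_le_ofReal (gaussianPDFReal_le μ v x)

lemma gaussianReal_real_closedBall_le (μ : ℝ) {v : ℝ≥0} (hv : v ≠ 0) (x : ℝ) {r : ℝ}
    (hr : 0 ≤ r) :
    (gaussianReal μ v).real (Metric.closedBall x r) ≤ (√(2 * π * v))⁻¹ * (2 * r) := by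
  have h := gaussianReal_le_mul_volume μ hv (Metric.closedBall x r)
  rw [Real.volume_closedBall, ← ENNReal.ofReal_mul (by positivity)] at h
  exact ENNReal.toReal_le_of_le_ofReal (by positivity) h

lemma hasSubgaussianMGF_id_gaussianReal (v : ℝ≥0) :
    HasSubgaussianMGF id v (gaussianReal 0 v) where
  integrable_exp_mul := integrable_exp_mul_gaussianReal
  mgf_le t := by simp [mgf_id_gaussianReal]

lemma gaussianReal_real_abs_ge_le (v : ℝ≥0) {T : ℝ} (hT : 0 ≤ T) :
    (gaussianReal 0 v).real {t | T ≤ |t|} ≤ 2 * exp (-T ^ 2 / (2 * v)) := by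
  have hsplit : {t : ℝ | T ≤ |t|} = {t | T ≤ id t} ∪ {t | T ≤ (-id) t} := by
    ext t; simp [le_abs]
  have hX := hasSubgaussianMGF_id_gaussianReal v
  calc (gaussianReal 0 v).real {t | T ≤ |t|}
      ≤ (gaussianReal 0 v).real {t | T ≤ id t} + (gaussianReal 0 v).real {t | T ≤ (-id) t} :=
        hsplit ▸ measureReal_union_le _ _
    _ ≤ exp (-T ^ 2 / (2 * v)) + exp (-T ^ 2 / (2 * v)) :=
        add_le_add (hX.measure_ge_le hT) (hX.neg.measure_ge_le hT)
    _ = 2 * exp (-T ^ 2 / (2 * v)) := by ring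

lemma abs_sub_le_abs_of_xor_lt_add {x y e : ℝ} (h : Xor (x < y + e) (x < y)) :
    |y - x| ≤ |e| := by
  rw [abs_le]
  rcases h with ⟨h₁, h₂⟩ | ⟨h₁, h₂⟩ <;> constructor <;>
    linarith [neg_abs_le e, le_abs_self e, not_lt.1 h₂]

lemma symmDiff_quadratic_perturbation_subset {a : ℝ} (ha : a ≠ 0) (ε x T : ℝ) :
    {t : ℝ | x < a * t + ε * t ^ 2} ∆ {t | x < a * t} ⊆
      Metric.closedBall (x / a) (|ε| * T ^ 2 / |a|) ∪ {t | T ≤ |t|} := by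
  intro t ht
  rcases le_or_gt T |t| with hT | hT
  · exact Or.inr hT
  left
  have hsq : t ^ 2 ≤ T ^ 2 := sq_le_sq.2 (hT.le.trans (le_abs_self T))
  have hwindow : |a * t - x| ≤ |ε| * T ^ 2 :=
    calc |a * t - x| ≤ |ε * t ^ 2| := abs_sub_le_abs_of_xor_lt_add ht
      _ = |ε| * t ^ 2 := by rw [abs_mul, abs_sq]
      _ ≤ |ε| * T ^ 2 := by gcongr
  rw [Metric.mem_closedBall, Real.dist_eq, le_div_iff₀ (abs_pos.2 ha), ← abs_mul, sub_mul,
    div_mul_cancel₀ x ha, mul_comm]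
  exact hwindow

theorem abs_gaussianReal_real_quadratic_sub_le {v : ℝ≥0} (hv : v ≠ 0) {a : ℝ} (ha : a ≠ 0)
    (ε x : ℝ) {T : ℝ} (hT : 0 ≤ T) :
    |(gaussianReal 0 v).real {t | x < a * t + ε * t ^ 2} -
        (gaussianReal 0 v).real {t | x < a * t}| ≤
      (√(2 * π * v))⁻¹ * (2 * (|ε| * T ^ 2 / |a|)) + 2 * exp (-T ^ 2 / (2 * v)) := by
  set μ := gaussianReal 0 v
  calc _ ≤ μ.real ({t | x < a * t + ε * t ^ 2} ∆ {t | x < a * t}) :=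
        abs_measureReal_sub_le_measureReal_symmDiff
          (measurableSet_lt measurable_const (by fun_prop)).nullMeasurableSet
          (measurableSet_lt measurable_const (by fun_prop)).nullMeasurableSet
    _ ≤ μ.real (Metric.closedBall (x / a) (|ε| * T ^ 2 / |a|)) + μ.real {t | T ≤ |t|} :=
        (measureReal_mono (symmDiff_quadratic_perturbation_subset ha ε x T)).trans
          (measureReal_union_le _ _)
    _ ≤ _ := add_le_add (gaussianReal_real_closedBall_le 0 hv _ (by positivity))
        (gaussianReal_real_abs_ge_le v hT)

/-- **Gaussian quadratic perturbation estimate.** -/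
theorem gaussian_quadratic_perturbation
    (a c σ : ℝ) (ha : a ≠ 0) (hσ : 0 < σ) :
    ∃ C : ℝ, 0 < C ∧
      ∀ N : ℕ, 2 ≤ N → ∀ x : ℝ,
        |gaussProb (σ ^ 2) {t | a * t + c / Real.sqrt N * t ^ 2 > x} -
            gaussProb (σ ^ 2) {t | a * t > x}|
          ≤ C * Real.log N / Real.sqrt N := by
  have hv : (σ ^ 2).toNNReal ≠ 0 := by simpa using hσ.ne'
  have hσ2 : ((σ ^ 2).toNNReal : ℝ) = σ ^ 2 := Real.coe_toNNReal _ (by positivity)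
  set c₀ := (√(2 * π * σ ^ 2))⁻¹
  refine ⟨2 * c₀ * |c| * σ ^ 2 / |a| + 2 / log 2, by positivity, fun N hN x => ?_⟩
  have hN : (2 : ℝ) ≤ N := by exact_mod_cast hN
  have hlog : log 2 ≤ log N := log_le_log two_pos hN
  have hT2 : (σ * √(log N)) ^ 2 = σ ^ 2 * log N := by
    rw [mul_pow, sq_sqrt ((log_pos one_lt_two).le.trans hlog)]
  have hbound := abs_gaussianReal_real_quadratic_sub_le hv ha (c / √N) x
    (T := σ * √(log N)) (by positivity)
  rw [hσ2, hT2, show -(σ ^ 2 * log N) / (2 * σ ^ 2) = -log N / 2 by field_simp,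
    exp_half, exp_neg, exp_log (by positivity), sqrt_inv] at hbound
  rw [gaussProb_eq_gaussianReal_real (by positivity),
    gaussProb_eq_gaussianReal_real (by positivity)]
  refine hbound.trans ?_
  have hsqrt : 0 < √(N : ℝ) := by positivity
  have hlog2 : 0 < log 2 := log_pos one_lt_two
  have hwindow : c₀ * (2 * (|c / √N| * (σ ^ 2 * log N) / |a|))
      = 2 * c₀ * |c| * σ ^ 2 / |a| * log N / √N := by
    rw [abs_div, abs_of_pos hsqrt]
    ring
  have htail : 2 * (√N)⁻¹ ≤ 2 / log 2 * log N / √N :=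
    calc 2 * (√N)⁻¹ = 2 * (√N)⁻¹ * 1 := (mul_one _).symm
      _ ≤ 2 * (√N)⁻¹ * (log N / log 2) := by gcongr; exact (one_le_div hlog2).2 hlog
      _ = 2 / log 2 * log N / √N := by ring
  rw [hwindow, add_mul, add_div]
  gcongr
end
end
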